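/- arXiv:2403.14935 — 4 statements merged into one kernel-verified Lean document; each statement's English description precedes it below -/
import Mathlib

section
/- Let P be a symmetric positive definite n×n matrix, γ > 0 with γ²I - P ≻ 0, and let A_c ∈ ℝ^{n×n}, C ∈ ℝ^{p×n}. Suppose P - A_cᵀ P A_c - Cᵀ C - A_cᵀ P (γ²I - P)⁻¹ P A_c ≻ 0. Then for all x, w ∈ ℝⁿ, with x⁺ = A_c x + w, it holds that (x⁺)ᵀ P x⁺ - xᵀ P x ≤ -‖C x‖² + γ² ‖w‖². -/
open Matrix

private lemma swapT {n : ℕ} (M : Matrix (Fin n) (Fin n) ℝ) (hM : Mᵀ = M)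
    (v w : Fin n → ℝ) : v ⬝ᵥ M.mulVec w = w ⬝ᵥ M.mulVec v := by
  rw [dotProduct_mulVec, dotProduct_comm, ← Matrix.mulVec_transpose, hM]

private lemma transp_pull {n p : ℕ} (M : Matrix (Fin p) (Fin n) ℝ)
    (x : Fin n → ℝ) (v : Fin p → ℝ) : x ⬝ᵥ Mᵀ.mulVec v = M.mulVec x ⬝ᵥ v := by
  rw [dotProduct_mulVec, vecMul_transpose]

theorem stmt0 {n p : ℕ}
    (P : Matrix (Fin n) (Fin n) ℝ) (hP : P.PosDef)
    (γ : ℝ) (hγ : 0 < γ)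
    (hγP : (γ ^ 2 • (1 : Matrix (Fin n) (Fin n) ℝ) - P).PosDef)
    (Ac : Matrix (Fin n) (Fin n) ℝ) (C : Matrix (Fin p) (Fin n) ℝ)
    (hRic : (P - Acᵀ * P * Ac - Cᵀ * C -
        Acᵀ * P * (γ ^ 2 • (1 : Matrix (Fin n) (Fin n) ℝ) - P)⁻¹ * P * Ac).PosDef)
    (x w : Fin n → ℝ) :
    (Ac.mulVec x + w) ⬝ᵥ P.mulVec (Ac.mulVec x + w) - x ⬝ᵥ P.mulVec x ≤
      -(∑ i, (C.mulVec x i) ^ 2) + γ ^ 2 * ∑ i, (w i) ^ 2 := by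
  set Q : Matrix (Fin n) (Fin n) ℝ := γ ^ 2 • (1 : Matrix (Fin n) (Fin n) ℝ) - P with hQdef
  have hPsym : Pᵀ = P := hP.1
  have hQsym : Qᵀ = Q := hγP.1
  have hQisym : (Q⁻¹)ᵀ = Q⁻¹ := by rw [Matrix.transpose_nonsing_inv, hQsym]
  have hQdet : IsUnit Q.det := isUnit_iff_ne_zero.2 (ne_of_gt hγP.det_pos)
  have hQQ : Q * Q⁻¹ = 1 := Matrix.mul_nonsing_inv Q hQdet
  set a : Fin n → ℝ := Ac.mulVec x with ha
  set u : Fin n → ℝ := Q⁻¹.mulVec (P.mulVec a) with hu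
  have hQu : Q.mulVec u = P.mulVec a := by
    rw [hu, Matrix.mulVec_mulVec, hQQ, Matrix.one_mulVec]
  -- nonnegativity of the completed square
  have hS : 0 ≤ (u - w) ⬝ᵥ Q.mulVec (u - w) := by
    have := hγP.posSemidef.re_dotProduct_nonneg (u - w)
    simpa using this
  -- nonnegativity of the Riccati form
  have hr : 0 ≤ x ⬝ᵥ (P - Acᵀ * P * Ac - Cᵀ * C - Acᵀ * P * Q⁻¹ * P * Ac).mulVec x := by
    have := hRic.posSemidef.re_dotProduct_nonneg x
    simpa using this
  -- rewrite the sums as dot products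
  have hCsum : ∑ i, (C.mulVec x i) ^ 2 = C.mulVec x ⬝ᵥ C.mulVec x := by
    simp [dotProduct, sq]
  have hwsum : ∑ i, (w i) ^ 2 = w ⬝ᵥ w := by simp [dotProduct, sq]
  rw [hCsum, hwsum]
  -- expand the Riccati quadratic form
  have hric_expand : x ⬝ᵥ (P - Acᵀ * P * Ac - Cᵀ * C - Acᵀ * P * Q⁻¹ * P * Ac).mulVec x
      = x ⬝ᵥ P.mulVec x - a ⬝ᵥ P.mulVec a - C.mulVec x ⬝ᵥ C.mulVec x
        - a ⬝ᵥ P.mulVec u := by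
    have h1 : x ⬝ᵥ (Acᵀ * P * Ac).mulVec x = a ⬝ᵥ P.mulVec a := by
      simp only [← Matrix.mulVec_mulVec]
      rw [transp_pull, ← ha]
    have h2 : x ⬝ᵥ (Cᵀ * C).mulVec x = C.mulVec x ⬝ᵥ C.mulVec x := by
      simp only [← Matrix.mulVec_mulVec]
      rw [transp_pull]
    have h3 : x ⬝ᵥ (Acᵀ * P * Q⁻¹ * P * Ac).mulVec x = a ⬝ᵥ P.mulVec u := by
      simp only [← Matrix.mulVec_mulVec]
      rw [transp_pull, ← ha, ← hu]
    rw [Matrix.sub_mulVec, Matrix.sub_mulVec, Matrix.sub_mulVec,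
        dotProduct_sub, dotProduct_sub, dotProduct_sub, h1, h2, h3]
  -- expand the square
  have hS_expand : (u - w) ⬝ᵥ Q.mulVec (u - w)
      = a ⬝ᵥ P.mulVec u - 2 * (w ⬝ᵥ P.mulVec a) + γ ^ 2 * (w ⬝ᵥ w) - w ⬝ᵥ P.mulVec w := by
    have huu : u ⬝ᵥ Q.mulVec u = a ⬝ᵥ P.mulVec u := by
      rw [hQu, swapT P hPsym]
    have huw : u ⬝ᵥ Q.mulVec w = w ⬝ᵥ P.mulVec a := by
      rw [swapT Q hQsym, hQu]
    have hwu : w ⬝ᵥ Q.mulVec u = w ⬝ᵥ P.mulVec a := by rw [hQu]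
    have hww : w ⬝ᵥ Q.mulVec w = γ ^ 2 * (w ⬝ᵥ w) - w ⬝ᵥ P.mulVec w := by
      rw [hQdef, Matrix.sub_mulVec, dotProduct_sub, Matrix.smul_mulVec,
          Matrix.one_mulVec, dotProduct_smul, smul_eq_mul]
    rw [Matrix.mulVec_sub, dotProduct_sub, sub_dotProduct, sub_dotProduct,
        huu, huw, hwu, hww]
    ring
  -- expand the LHS
  have hLHS : (a + w) ⬝ᵥ P.mulVec (a + w)
      = a ⬝ᵥ P.mulVec a + 2 * (w ⬝ᵥ P.mulVec a) + w ⬝ᵥ P.mulVec w := by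
    rw [Matrix.mulVec_add, dotProduct_add, add_dotProduct, add_dotProduct,
        swapT P hPsym a w]
    ring
  rw [hric_expand] at hr
  rw [hS_expand] at hS
  rw [hLHS]
  linarith
end

section
/- Let P_t (t ∈ ℕ) be symmetric positive definite matrices, γ_t > 0, and suppose for each t the one-step inequality x(t+1)ᵀP_t x(t+1) - x(t)ᵀP_t x(t) ≤ -‖y₁(t)‖² + γ_t² ‖w(t)‖² holds. Define Δ₁ = 0 and Δ_{t+1} = Δ_t - (x(t)ᵀP_t x(t) - x(t)ᵀP_{t-1}x(t)) for t ≥ 1, and suppose x(t)ᵀP_t x(t) - x(t)ᵀP_{t-1}x(t) ≤ Δ_t for all t ≥ 1. Then for all t ∈ ℕ, Σ_{i=0}^t ‖y₁(i)‖² ≤ γ̄_t² Σ_{i=0}^t ‖w(i)‖² + x(0)ᵀP₀x(0), where γ̄_t = max{γ₀, γ₁, …, γ_t}. -/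
/-!
Adding the one-step dissipation inequalities telescopes, except that the storage matrix changes
at every step; the change `x(t)ᵀP_t x(t) - x(t)ᵀP_{t-1} x(t)` is exactly what the slack `Δ`
absorbs. Hence `∑ ‖y₁‖² + x(t+1)ᵀP_t x(t+1) + Δ_{t+1} ≤ ∑ γ_i² ‖w(i)‖² + x(0)ᵀP₀x(0)`, and the
storage term and the slack are nonnegative, the latter because each decrement is bounded by
the current slack. Finally `γ_i ≤ γ̄_t`.
-/

open Finset Matrix

/-- `V t = x(t)ᵀP_t x(t)` and `W t = x(t+1)ᵀP_t x(t+1)`: both use the time-`t` storage matrix. -/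
theorem sum_add_storage_add_slack_le_of_dissipation {V W Δ c s : ℕ → ℝ}
    (hdiss : ∀ t, W t - V t ≤ -c t + s t) (hΔ₁ : Δ 1 = 0)
    (hΔ : ∀ t, Δ (t + 2) = Δ (t + 1) - (V (t + 1) - W t)) (t : ℕ) :
    ∑ i ∈ range (t + 1), c i + W t + Δ (t + 1) ≤ ∑ i ∈ range (t + 1), s i + V 0 := by
  induction t with
  | zero => simp only [zero_add, sum_range_one, hΔ₁]; linarith [hdiss 0]
  | succ t ih =>
    rw [sum_range_succ, sum_range_succ s, hΔ t]
    linarith [hdiss (t + 1)]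

theorem slack_nonneg {Δ d : ℕ → ℝ} (hΔ₁ : Δ 1 = 0) (hΔ : ∀ t ≥ 1, Δ (t + 1) = Δ t - d t)
    (hd : ∀ t ≥ 1, d t ≤ Δ t) (t : ℕ) : 0 ≤ Δ (t + 1) := by
  rcases Nat.eq_zero_or_pos t with rfl | ht
  · exact hΔ₁.ge
  · rw [hΔ t ht]
    linarith [hd t ht]

theorem sum_sq_mul_le_sup'_sq_mul_sum {ι : Type*} {s : Finset ι} (hs : s.Nonempty)
    {γ a : ι → ℝ} (hγ : ∀ i, 0 ≤ γ i) (ha : ∀ i, 0 ≤ a i) :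
    ∑ i ∈ s, γ i ^ 2 * a i ≤ s.sup' hs γ ^ 2 * ∑ i ∈ s, a i := by
  rw [mul_sum]
  gcongr with i hi
  · exact ha i
  · exact hγ i
  · exact le_sup' γ hi

theorem stmt3 {n p₁ : ℕ}
    (P : ℕ → Matrix (Fin n) (Fin n) ℝ) (hP : ∀ t, (P t).PosDef)
    (γ : ℕ → ℝ) (hγ : ∀ t, 0 < γ t)
    (x : ℕ → Fin n → ℝ) (y₁ : ℕ → Fin p₁ → ℝ) (w : ℕ → Fin n → ℝ)
    (hdiss : ∀ t, x (t + 1) ⬝ᵥ (P t).mulVec (x (t + 1)) - x t ⬝ᵥ (P t).mulVec (x t) ≤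
      -(∑ i, (y₁ t i) ^ 2) + (γ t) ^ 2 * ∑ i, (w t i) ^ 2)
    (Δ : ℕ → ℝ) (hΔ1 : Δ 1 = 0)
    (hΔrec : ∀ t ≥ 1, Δ (t + 1) = Δ t -
      (x t ⬝ᵥ (P t).mulVec (x t) - x t ⬝ᵥ (P (t - 1)).mulVec (x t)))
    (hslack : ∀ t ≥ 1, x t ⬝ᵥ (P t).mulVec (x t) - x t ⬝ᵥ (P (t - 1)).mulVec (x t) ≤ Δ t) :
    ∀ t, ∑ i ∈ Finset.range (t + 1), ∑ j, (y₁ i j) ^ 2 ≤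
      ((Finset.range (t + 1)).sup' (by simp) γ) ^ 2 *
        ∑ i ∈ Finset.range (t + 1), ∑ j, (w i j) ^ 2 +
        x 0 ⬝ᵥ (P 0).mulVec (x 0) := by
  intro t
  have hbalance := sum_add_storage_add_slack_le_of_dissipation hdiss hΔ1
    (fun t => hΔrec (t + 1) (Nat.le_add_left 1 t)) t
  have hstorage : 0 ≤ x (t + 1) ⬝ᵥ (P t).mulVec (x (t + 1)) := by
    simpa using (hP t).posSemidef.dotProduct_mulVec_nonneg (x (t + 1))
  have hγbar := sum_sq_mul_le_sup'_sq_mul_sum (s := range (t + 1)) (by simp)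
    (a := fun i => ∑ j, w i j ^ 2) (fun i => (hγ i).le) (fun i => sum_nonneg fun j _ => sq_nonneg _)
  linarith [slack_nonneg hΔ1 hΔrec hslack t]
end

section
/- Suppose a sequence (η_t) of optimal values of the moving-horizon problem satisfies η_{t+1} ≥ η_t > 0 for all t ∈ ℕ, and along the closed-loop trajectory for each t: x(t+1)ᵀP_t x(t+1) - x(t)ᵀP_t x(t) ≤ -‖y₁(t)‖² + η_t⁻¹‖w(t)‖² and x(t)ᵀP_t x(t) ≤ x(t)ᵀP_{t-1}x(t) + Δ_t with Δ recursively defined (Δ₁ = 0, Δ_{t+1} = Δ_t - (x(t)ᵀP_t x(t) - x(t)ᵀP_{t-1}x(t))). Then for all t, Σ_{i=0}^t ‖y₁(i)‖² ≤ η₀⁻¹ Σ_{i=0}^t ‖w(i)‖² + x(0)ᵀP₀x(0). -/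
open Matrix

theorem stmt13 {n p₁ : ℕ}
    (P : ℕ → Matrix (Fin n) (Fin n) ℝ) (hP : ∀ t, (P t).PosDef)
    (η : ℕ → ℝ) (hη : ∀ t, 0 < η t) (hηmono : ∀ t, η t ≤ η (t + 1))
    (x : ℕ → Fin n → ℝ) (y₁ : ℕ → Fin p₁ → ℝ) (w : ℕ → Fin n → ℝ)
    (hdiss : ∀ t, x (t + 1) ⬝ᵥ (P t).mulVec (x (t + 1)) - x t ⬝ᵥ (P t).mulVec (x t) ≤
      -(∑ i, (y₁ t i) ^ 2) + (η t)⁻¹ * ∑ i, (w t i) ^ 2)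
    (Δ : ℕ → ℝ) (hΔ1 : Δ 1 = 0)
    (hΔrec : ∀ t ≥ 1, Δ (t + 1) = Δ t -
      (x t ⬝ᵥ (P t).mulVec (x t) - x t ⬝ᵥ (P (t - 1)).mulVec (x t)))
    (hslack : ∀ t ≥ 1, x t ⬝ᵥ (P t).mulVec (x t) ≤
      x t ⬝ᵥ (P (t - 1)).mulVec (x t) + Δ t) :
    ∀ t, ∑ i ∈ Finset.range (t + 1), ∑ j, (y₁ i j) ^ 2 ≤
      (η 0)⁻¹ * ∑ i ∈ Finset.range (t + 1), ∑ j, (w i j) ^ 2 +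
        x 0 ⬝ᵥ (P 0).mulVec (x 0) := by
  have hquad : ∀ t (v : Fin n → ℝ), 0 ≤ v ⬝ᵥ (P t).mulVec v := by
    intro t v
    have := (hP t).posSemidef.re_dotProduct_nonneg v
    simpa using this
  have hΔnn : ∀ t, 0 ≤ Δ (t + 1) := by
    intro t
    induction t with
    | zero => simp [hΔ1]
    | succ k ih =>
      rw [hΔrec (k + 1) (by omega)]
      have := hslack (k + 1) (by omega)
      linarith
  have hηle : ∀ t, η 0 ≤ η t := by
    intro t
    induction t with
    | zero => exact le_rfl
    | succ k ih => exact ih.trans (hηmono k)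
  have hwnn : ∀ t, (0:ℝ) ≤ ∑ j, (w t j) ^ 2 :=
    fun t => Finset.sum_nonneg fun j _ => sq_nonneg _
  have hinv : ∀ t, (η t)⁻¹ ≤ (η 0)⁻¹ := fun t =>
    inv_anti₀ (hη 0) (hηle t)
  -- key invariant
  have key : ∀ t, (∑ i ∈ Finset.range (t + 1), ∑ j, (y₁ i j) ^ 2)
      + x (t + 1) ⬝ᵥ (P t).mulVec (x (t + 1)) + Δ (t + 1) ≤
      (η 0)⁻¹ * ∑ i ∈ Finset.range (t + 1), ∑ j, (w i j) ^ 2 +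
        x 0 ⬝ᵥ (P 0).mulVec (x 0) := by
    intro t
    induction t with
    | zero =>
      have h0 := hdiss 0
      simp only [zero_add, Finset.sum_range_one, hΔ1]
      linarith
    | succ k ih =>
      have hd := hdiss (k + 1)
      have hr := hΔrec (k + 1) (by omega)
      have hmul : (η (k+1))⁻¹ * ∑ j, (w (k+1) j) ^ 2 ≤
          (η 0)⁻¹ * ∑ j, (w (k+1) j) ^ 2 :=
        mul_le_mul_of_nonneg_right (hinv (k+1)) (hwnn (k+1))
      rw [Finset.sum_range_succ, Finset.sum_range_succ (fun i => ∑ j, (w i j) ^ 2)]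
      simp only [Nat.add_sub_cancel] at hr
      rw [hr]
      ring_nf
      ring_nf at ih hd hmul ⊢
      linarith
  intro t
  have h := key t
  have h1 := hquad t (x (t + 1))
  have h2 := hΔnn t
  linarith
end

section
/- Let Q ≻ 0 symmetric n×n, Y ∈ ℝ^{m×n}, and set P = Q⁻¹, K = YQ⁻¹. Suppose R := Q - (C₁Q+D₁Y)ᵀ(C₁Q+D₁Y) ≻ 0 and Q - γ⁻²I - (A₀Q+B₀Y)R⁻¹(A₀Q+B₀Y)ᵀ ≻ 0 for some γ > 0. Then γ²I - P ≻ 0 and P - (A₀+B₀K)ᵀP(A₀+B₀K) - (C₁+D₁K)ᵀ(C₁+D₁K) - (A₀+B₀K)ᵀP(γ²I-P)⁻¹P(A₀+B₀K) ≻ 0. -/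
/-! Both conclusions come from the Schur-complement swap: for `A, D ≻ 0`,
`A - B D⁻¹ Bᴴ ≻ 0 ↔ D - Bᴴ A⁻¹ B ≻ 0`, as both say that `[A B; Bᴴ D]` is positive definite.
Writing `F := A₀Q + B₀Y`, the second LMI reads `Q - γ⁻²I - F R⁻¹ Fᵀ ≻ 0`, so `Q - γ⁻²I ≻ 0`;
with `B = 1` the swap turns this into `γ²I - P ≻ 0`, and with `B = F` it turns the LMI into
`R - Fᵀ (Q - γ⁻²I)⁻¹ F ≻ 0`. By Woodbury `(Q - γ⁻²I)⁻¹ = P + P (γ²I - P)⁻¹ P`, and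
`A₀ + B₀K = FP`, `C₁ + D₁K = (C₁Q + D₁Y)P`, so the Riccati expression is exactly the congruence
`P (R - Fᵀ (Q - γ⁻²I)⁻¹ F) P`. -/

open scoped ComplexOrder

namespace Matrix

variable {l m n p 𝕜 : Type*} [Fintype m] [DecidableEq m] [Fintype n] [DecidableEq n] [Fintype p]
  [RCLike 𝕜]

theorem posDef_iff_of_posSemidef_iff_of_det_eq {M : Matrix m m 𝕜} {S : Matrix n n 𝕜}
    (hpsd : M.PosSemidef ↔ S.PosSemidef) {c : 𝕜} (hc : c ≠ 0) (hdet : M.det = c * S.det) :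
    M.PosDef ↔ S.PosDef := by
  constructor
  · intro hM
    have hM0 : M.det ≠ 0 := hM.posSemidef.posDef_iff_det_ne_zero.1 hM
    rw [(hpsd.1 hM.posSemidef).posDef_iff_det_ne_zero]
    exact right_ne_zero_of_mul (hdet ▸ hM0)
  · intro hS
    rw [(hpsd.2 hS.posSemidef).posDef_iff_det_ne_zero, hdet]
    exact mul_ne_zero hc (hS.posSemidef.posDef_iff_det_ne_zero.1 hS)

theorem posDef_fromBlocks₁₁_iff {A : Matrix m m 𝕜} (B : Matrix m n 𝕜) (D : Matrix n n 𝕜)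
    (hA : A.PosDef) :
    (fromBlocks A B Bᴴ D).PosDef ↔ (D - Bᴴ * A⁻¹ * B).PosDef := by
  have := hA.isUnit.invertible
  refine posDef_iff_of_posSemidef_iff_of_det_eq (PosDef.fromBlocks₁₁ B D hA)
    ((isUnit_iff_isUnit_det A).1 hA.isUnit).ne_zero ?_
  rw [det_fromBlocks₁₁, invOf_eq_nonsing_inv]

theorem posDef_fromBlocks₂₂_iff (A : Matrix m m 𝕜) (B : Matrix m n 𝕜) {D : Matrix n n 𝕜}
    (hD : D.PosDef) :
    (fromBlocks A B Bᴴ D).PosDef ↔ (A - B * D⁻¹ * Bᴴ).PosDef := by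
  have := hD.isUnit.invertible
  refine posDef_iff_of_posSemidef_iff_of_det_eq (PosDef.fromBlocks₂₂ A B hD)
    ((isUnit_iff_isUnit_det D).1 hD.isUnit).ne_zero ?_
  rw [det_fromBlocks₂₂, invOf_eq_nonsing_inv]

theorem posDef_sub_mul_inv_mul_conjTranspose_iff {A : Matrix m m 𝕜} {D : Matrix n n 𝕜}
    (hA : A.PosDef) (hD : D.PosDef) (B : Matrix m n 𝕜) :
    (A - B * D⁻¹ * Bᴴ).PosDef ↔ (D - Bᴴ * A⁻¹ * B).PosDef := by
  rw [← posDef_fromBlocks₂₂_iff A B hD, posDef_fromBlocks₁₁_iff B D hA]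

theorem posDef_sub_inv_smul_one_iff {Q : Matrix n n ℝ} (hQ : Q.PosDef) {c : ℝ} (hc : 0 < c) :
    (Q - c⁻¹ • (1 : Matrix n n ℝ)).PosDef ↔ (c • (1 : Matrix n n ℝ) - Q⁻¹).PosDef := by
  have hinv : (c • (1 : Matrix n n ℝ))⁻¹ = c⁻¹ • 1 :=
    inv_eq_right_inv (by rw [smul_mul_smul_comm, mul_inv_cancel₀ hc.ne', one_mul, one_smul])
  simpa [hinv] using
    posDef_sub_mul_inv_mul_conjTranspose_iff hQ (PosDef.one.smul hc) (1 : Matrix n n ℝ)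

variable {K : Type*} [Field K]

theorem inv_sub_inv_smul_one {Q : Matrix n n K} (hQ : IsUnit Q.det) {c : K} (hc : c ≠ 0)
    (hW : IsUnit (c • 1 - Q⁻¹).det) :
    (Q - c⁻¹ • 1)⁻¹ = Q⁻¹ + Q⁻¹ * (c • 1 - Q⁻¹)⁻¹ * Q⁻¹ := by
  have hTQ : (Q - c⁻¹ • 1) * Q⁻¹ = c⁻¹ • (c • 1 - Q⁻¹) := by
    rw [sub_mul, mul_nonsing_inv Q hQ, smul_sub, smul_smul, inv_mul_cancel₀ hc, one_smul,
      smul_mul, one_mul]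
  apply inv_eq_right_inv
  rw [mul_add, ← mul_assoc, ← mul_assoc, hTQ, smul_mul, mul_nonsing_inv _ hW, smul_mul, one_mul,
    ← smul_add, sub_add_cancel, smul_smul, inv_mul_cancel₀ hc, one_smul]

theorem add_mul_mul_inv_eq_mul_inv {Q : Matrix n n K} (hQ : IsUnit Q.det) (A : Matrix l n K)
    (B : Matrix l p K) (Y : Matrix p n K) :
    A + B * (Y * Q⁻¹) = (A * Q + B * Y) * Q⁻¹ := by
  rw [Matrix.add_mul, mul_nonsing_inv_cancel_right _ _ hQ, Matrix.mul_assoc]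

theorem inv_sub_closedLoop_eq {Q : Matrix n n K} (hQ : IsUnit Q.det) (hQt : Qᵀ = Q)
    (F : Matrix n n K) (G : Matrix p n K) (S : Matrix n n K) :
    Q⁻¹ - (F * Q⁻¹)ᵀ * Q⁻¹ * (F * Q⁻¹) - (G * Q⁻¹)ᵀ * (G * Q⁻¹) -
        (F * Q⁻¹)ᵀ * Q⁻¹ * S * Q⁻¹ * (F * Q⁻¹) =
      Q⁻¹ * (Q - Gᵀ * G - Fᵀ * (Q⁻¹ + Q⁻¹ * S * Q⁻¹) * F) * Q⁻¹ := by
  have hQit : Q⁻¹ᵀ = Q⁻¹ := by rw [transpose_nonsing_inv, hQt]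
  simp only [transpose_mul, hQit, Matrix.mul_sub, Matrix.sub_mul, Matrix.mul_add, Matrix.add_mul,
    Matrix.mul_assoc, mul_nonsing_inv _ hQ, Matrix.mul_one]
  abel

end Matrix

open Matrix

theorem stmt16 {n m p₁ : ℕ}
    (Q : Matrix (Fin n) (Fin n) ℝ) (hQ : Q.PosDef)
    (Y : Matrix (Fin m) (Fin n) ℝ)
    (A₀ : Matrix (Fin n) (Fin n) ℝ) (B₀ : Matrix (Fin n) (Fin m) ℝ)
    (C₁ : Matrix (Fin p₁) (Fin n) ℝ) (D₁ : Matrix (Fin p₁) (Fin m) ℝ)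
    (γ : ℝ) (hγ : 0 < γ)
    (hR : (Q - (C₁ * Q + D₁ * Y)ᵀ * (C₁ * Q + D₁ * Y)).PosDef)
    (h15b : (Q - γ⁻¹ ^ 2 • (1 : Matrix (Fin n) (Fin n) ℝ) -
        (A₀ * Q + B₀ * Y) * (Q - (C₁ * Q + D₁ * Y)ᵀ * (C₁ * Q + D₁ * Y))⁻¹ *
          (A₀ * Q + B₀ * Y)ᵀ).PosDef) :
    (γ ^ 2 • (1 : Matrix (Fin n) (Fin n) ℝ) - Q⁻¹).PosDef ∧
      (Q⁻¹ - (A₀ + B₀ * (Y * Q⁻¹))ᵀ * Q⁻¹ * (A₀ + B₀ * (Y * Q⁻¹)) -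
        (C₁ + D₁ * (Y * Q⁻¹))ᵀ * (C₁ + D₁ * (Y * Q⁻¹)) -
        (A₀ + B₀ * (Y * Q⁻¹))ᵀ * Q⁻¹ *
          (γ ^ 2 • (1 : Matrix (Fin n) (Fin n) ℝ) - Q⁻¹)⁻¹ * Q⁻¹ *
          (A₀ + B₀ * (Y * Q⁻¹))).PosDef := by
  set F := A₀ * Q + B₀ * Y
  have hQdet : IsUnit Q.det := (isUnit_iff_isUnit_det Q).1 hQ.isUnit
  have hγ2 : 0 < γ ^ 2 := pow_pos hγ 2
  rw [inv_pow] at h15b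
  have hT : (Q - (γ ^ 2)⁻¹ • 1).PosDef := by
    simpa [conjTranspose_eq_transpose_of_trivial] using
      h15b.add_posSemidef (hR.inv.posSemidef.mul_mul_conjTranspose_same F)
  have hW := (posDef_sub_inv_smul_one_iff hQ hγ2).1 hT
  have hSchur := posDef_sub_mul_inv_mul_conjTranspose_iff hT hR F
  rw [conjTranspose_eq_transpose_of_trivial] at hSchur
  refine ⟨hW, ?_⟩
  rw [add_mul_mul_inv_eq_mul_inv hQdet, add_mul_mul_inv_eq_mul_inv hQdet,
    inv_sub_closedLoop_eq hQdet hQ.1,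
    ← inv_sub_inv_smul_one hQdet hγ2.ne' ((isUnit_iff_isUnit_det _).1 hW.isUnit)]
  have hconj := hQ.inv.isUnit.posDef_star_left_conjugate_iff.2 (hSchur.1 h15b)
  rwa [star_eq_conjTranspose, hQ.inv.1.eq] at hconj
end
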